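/- Let f(z) = Σ_{k≥0} a_k z^k be analytic on the unit disk with |f(z)| ≤ 1, and let p ∈ (0,2]. Then for all r with 0 ≤ r ≤ (−1 + √(1+2p))/2 (the minimal positive root of p = 2r(1+r)), the inequality |a_0|^p + |a_1| r + |a_2| r² + |a_1|² r²/(1+|a_0|) ≤ 1 holds. -/

import Mathlib

/-!
The bound rests on two classical coefficient estimates for a holomorphic self-map `f` of the
unit disk. Schwarz–Pick at the origin gives `|a₁| ≤ 1 - |a₀|²`. Applying it once more to the
first Schur iterate `G = (f - a₀) / (z (1 - conj a₀ f))`, whose values at `0` are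
`a₁ / (1 - |a₀|²)` and `(a₂ (1 - |a₀|²) + conj a₀ a₁²) / (1 - |a₀|²)²`, gives
`|a₂| + |a₁|² / (1 + |a₀|) ≤ 1 - |a₀|²`. With `2 r (1 + r) ≤ p` and Bernoulli's inequality
`|a₀|^p = (|a₀|²)^(p/2) ≤ 1 - (p/2) (1 - |a₀|²)` the left-hand side is then at most
`|a₀|^p + (1 - |a₀|²) (r + r²) ≤ 1`.
-/

open Metric Set Topology ComplexConjugate NNReal

theorem dslope_eventuallyEq_zero_of_eventuallyEq_const {𝕜 E : Type*}
    [NontriviallyNormedField 𝕜] [NormedAddCommGroup E] [NormedSpace 𝕜 E] {f : 𝕜 → E} {c : 𝕜}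
    (h : f =ᶠ[𝓝 c] fun _ ↦ f c) : dslope f c =ᶠ[𝓝 c] 0 := by
  filter_upwards [h] with z hz
  rcases eq_or_ne z c with rfl | hne
  · rw [dslope_same, h.deriv_eq, deriv_const, Pi.zero_apply]
  · rw [dslope_of_ne _ hne, slope_def_module, hz, sub_self, smul_zero, Pi.zero_apply]

namespace Complex

theorem one_sub_conj_mul_ne_zero {w v : ℂ} (hw : ‖w‖ < 1) (hv : ‖v‖ ≤ 1) :
    1 - conj w * v ≠ 0 := by
  have : ‖conj w * v‖ < 1 := by
    rw [norm_mul, RCLike.norm_conj]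
    nlinarith [norm_nonneg w, norm_nonneg v]
  intro h
  rw [← sub_eq_zero.mp h, norm_one] at this
  exact this.false

theorem norm_one_sub_conj_mul_sq_sub_norm_sub_sq (w v : ℂ) :
    ‖1 - conj w * v‖ ^ 2 - ‖v - w‖ ^ 2 = (1 - ‖w‖ ^ 2) * (1 - ‖v‖ ^ 2) := by
  simp only [← normSq_eq_norm_sq, normSq_apply, sub_re, sub_im, mul_re, mul_im, one_re, one_im,
    conj_re, conj_im]
  ring

theorem one_sub_conj_mul_self (w : ℂ) : 1 - conj w * w = ((1 - ‖w‖ ^ 2 : ℝ) : ℂ) := by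
  push_cast [conj_mul']
  rfl

theorem norm_sub_div_one_sub_conj_mul_le_one {w v : ℂ} (hw : ‖w‖ < 1) (hv : ‖v‖ ≤ 1) :
    ‖(v - w) / (1 - conj w * v)‖ ≤ 1 := by
  have hpos : 0 < ‖1 - conj w * v‖ := norm_pos_iff.mpr (one_sub_conj_mul_ne_zero hw hv)
  rw [norm_div, div_le_one hpos]
  refine pow_le_pow_iff_left₀ (norm_nonneg _) hpos.le two_ne_zero |>.mp ?_
  have hw2 : 0 ≤ 1 - ‖w‖ ^ 2 := by nlinarith [norm_nonneg w]
  have hv2 : 0 ≤ 1 - ‖v‖ ^ 2 := by nlinarith [norm_nonneg v]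
  nlinarith [norm_one_sub_conj_mul_sq_sub_norm_sub_sq w v, mul_nonneg hw2 hv2]

theorem eventuallyEq_const_of_mapsTo_closedBall_of_norm_eq {F : ℂ → ℂ} {c : ℂ} {R M : ℝ}
    (hd : DifferentiableOn ℂ F (ball c R)) (hmaps : MapsTo F (ball c R) (closedBall 0 M))
    (hR : 0 < R) (hM : ‖F c‖ = M) : F =ᶠ[𝓝 c] fun _ ↦ F c := by
  have hball : ball c R ∈ 𝓝 c := ball_mem_nhds c hR
  refine eventually_eq_of_isLocalMax_norm ?_ ?_
  · filter_upwards [hball] with z hz using hd.differentiableAt (isOpen_ball.mem_nhds hz)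
  · filter_upwards [hball] with z hz
    simpa [hM] using hmaps hz

theorem norm_deriv_le_one_sub_sq_div_of_mapsTo_closedBall {F : ℂ → ℂ} {c : ℂ} {R : ℝ}
    (hd : DifferentiableOn ℂ F (ball c R)) (hmaps : MapsTo F (ball c R) (closedBall 0 1))
    (hR : 0 < R) : ‖deriv F c‖ ≤ (1 - ‖F c‖ ^ 2) / R := by
  have hc : c ∈ ball c R := mem_ball_self hR
  have hFc : ‖F c‖ ≤ 1 := by simpa using hmaps hc
  rcases hFc.lt_or_eq with hlt | heq
  swap
  · rw [(eventuallyEq_const_of_mapsTo_closedBall_of_norm_eq hd hmaps hR heq).deriv_eq]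
    simp [heq]
  set w := F c
  set D : ℂ → ℂ := fun z ↦ 1 - conj w * F z
  have hDne : ∀ z ∈ ball c R, D z ≠ 0 := fun z hz ↦
    one_sub_conj_mul_ne_zero hlt (by simpa using hmaps hz)
  have hDc : D c = ((1 - ‖w‖ ^ 2 : ℝ) : ℂ) := one_sub_conj_mul_self w
  set g : ℂ → ℂ := fun z ↦ (F z - w) / D z
  have hgd : DifferentiableOn ℂ g (ball c R) :=
    (hd.sub_const w).div ((differentiableOn_const 1).sub (hd.const_mul _)) hDne
  have hgmaps : MapsTo g (ball c R) (closedBall (g c) 1) := fun z hz ↦ by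
    simpa [g, w] using norm_sub_div_one_sub_conj_mul_le_one hlt (by simpa using hmaps hz)
  have hF : HasDerivAt F (deriv F c) c :=
    (hd.differentiableAt (isOpen_ball.mem_nhds hc)).hasDerivAt
  have hg : deriv g c = deriv F c / D c := by
    have hD : HasDerivAt D (0 - conj w * deriv F c) c :=
      (hasDerivAt_const c (1 : ℂ)).sub (hF.const_mul (conj w))
    have : HasDerivAt g _ c := (hF.sub_const w).div hD (hDne c hc)
    rw [this.deriv, sub_self, zero_mul, sub_zero, pow_two, mul_div_mul_right _ _ (hDne c hc)]
  have hschwarz := norm_deriv_le_div_of_mapsTo_ball hgd hgmaps hR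
  have hpos : 0 < 1 - ‖w‖ ^ 2 := by nlinarith [norm_nonneg w]
  rw [hg, norm_div, hDc, norm_real, Real.norm_of_nonneg hpos.le, div_le_div_iff₀ hpos hR] at hschwarz
  rw [le_div_iff₀ hR]
  linarith

theorem norm_le_div_of_norm_sub_mul_le {G : ℂ → ℂ} {c z : ℂ} {R M : ℝ}
    (hd : DifferentiableOn ℂ G (ball c R)) (hG : ∀ z ∈ ball c R, ‖(z - c) * G z‖ ≤ M)
    (hz : z ∈ ball c R) : ‖G z‖ ≤ M / R := by
  set g : ℂ → ℂ := fun z ↦ (z - c) • G z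
  have hdslope : dslope g c z = G z := by
    rcases eq_or_ne z c with rfl | hne
    · have hG : HasDerivAt G (deriv G z) z :=
        (hd.differentiableAt (isOpen_ball.mem_nhds hz)).hasDerivAt
      have : HasDerivAt g _ z := ((hasDerivAt_id z).sub_const z).smul hG
      rw [dslope_same, this.deriv]
      simp
    · exact dslope_sub_smul_of_ne G hne
  have hgd : DifferentiableOn ℂ g (ball c R) :=
    (differentiableOn_id.sub_const c).smul hd
  have hgmaps : MapsTo g (ball c R) (closedBall (g c) M) := fun z hz ↦ by
    simpa [g] using hG z hz
  simpa [hdslope] using norm_dslope_le_div_of_mapsTo_ball hgd hgmaps hz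

theorem norm_add_sq_div_one_add_norm_le {w f₁ f₂ : ℂ} (hw : ‖w‖ < 1)
    (h : ‖f₂ * (1 - ‖w‖ ^ 2 : ℝ) + conj w * f₁ ^ 2‖ + ‖f₁‖ ^ 2 ≤ (1 - ‖w‖ ^ 2) ^ 2) :
    ‖f₂‖ + ‖f₁‖ ^ 2 / (1 + ‖w‖) ≤ 1 - ‖w‖ ^ 2 := by
  set s := 1 - ‖w‖ ^ 2
  have hs : 0 < s := by nlinarith [norm_nonneg w]
  have htri : ‖f₂‖ * s - ‖w‖ * ‖f₁‖ ^ 2 ≤ ‖f₂ * s + conj w * f₁ ^ 2‖ := by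
    have := norm_sub_norm_le (f₂ * s) (-(conj w * f₁ ^ 2))
    simp only [sub_neg_eq_add, norm_neg, norm_mul, norm_pow, RCLike.norm_conj, norm_real,
      Real.norm_of_nonneg hs.le] at this
    linarith
  have hsplit : ‖f₁‖ ^ 2 / (1 + ‖w‖) = (1 - ‖w‖) * ‖f₁‖ ^ 2 / s := by
    field_simp
    ring
  rw [hsplit, add_div' _ _ _ hs.ne', div_le_iff₀ hs]
  nlinarith

theorem norm_deriv_dslope_add_sq_div_le {f : ℂ → ℂ} {c : ℂ}
    (hd : DifferentiableOn ℂ f (ball c 1)) (hmaps : MapsTo f (ball c 1) (closedBall 0 1)) :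
    ‖deriv (dslope f c) c‖ + ‖deriv f c‖ ^ 2 / (1 + ‖f c‖) ≤ 1 - ‖f c‖ ^ 2 := by
  have hc : c ∈ ball c 1 := mem_ball_self one_pos
  have hfc : ‖f c‖ ≤ 1 := by simpa using hmaps hc
  rcases hfc.lt_or_eq with hlt | heq
  swap
  · have hconst := eventuallyEq_const_of_mapsTo_closedBall_of_norm_eq hd hmaps one_pos heq
    rw [(dslope_eventuallyEq_zero_of_eventuallyEq_const hconst).deriv_eq, hconst.deriv_eq]
    simp [heq]
  set w := f c
  set f₁ := deriv f c
  set F₁ := dslope f c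
  set f₂ := deriv F₁ c
  set D : ℂ → ℂ := fun z ↦ 1 - conj w * f z
  set s := 1 - ‖w‖ ^ 2
  have hs : 0 < s := by nlinarith [norm_nonneg w]
  have hDne : ∀ z ∈ ball c 1, D z ≠ 0 := fun z hz ↦
    one_sub_conj_mul_ne_zero hlt (by simpa using hmaps hz)
  have hDc : D c = (s : ℂ) := one_sub_conj_mul_self w
  have hF₁d : DifferentiableOn ℂ F₁ (ball c 1) :=
    (differentiableOn_dslope (isOpen_ball.mem_nhds hc)).mpr hd
  set G : ℂ → ℂ := fun z ↦ F₁ z / D z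
  have hGd : DifferentiableOn ℂ G (ball c 1) :=
    hF₁d.div ((differentiableOn_const 1).sub (hd.const_mul _)) hDne
  -- `(z - c) G(z)` is the Möbius transform of `f` sending `f c` to `0`.
  have hGmaps : MapsTo G (ball c 1) (closedBall 0 1) := fun z hz ↦ by
    refine mem_closedBall_zero_iff.mpr ?_
    refine div_one (1 : ℝ) ▸ norm_le_div_of_norm_sub_mul_le hGd (fun z hz ↦ ?_) hz
    rw [← mul_div_assoc, ← smul_eq_mul, sub_smul_dslope]
    exact norm_sub_div_one_sub_conj_mul_le_one hlt (by simpa using hmaps hz)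
  have hf : HasDerivAt f f₁ c := (hd.differentiableAt (isOpen_ball.mem_nhds hc)).hasDerivAt
  have hF₁ : HasDerivAt F₁ f₂ c := (hF₁d.differentiableAt (isOpen_ball.mem_nhds hc)).hasDerivAt
  have hD : HasDerivAt D (0 - conj w * f₁) c := (hasDerivAt_const c (1 : ℂ)).sub (hf.const_mul _)
  have hGc : G c = f₁ / s := by simp only [G, F₁, dslope_same, hDc]; rfl
  have hG' : deriv G c = (f₂ * s + conj w * f₁ ^ 2) / s ^ 2 := by
    have : HasDerivAt G _ c := hF₁.div hD (hDne c hc)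
    rw [this.deriv, hDc, show F₁ c = f₁ from dslope_same f c]
    ring
  have hSP := norm_deriv_le_one_sub_sq_div_of_mapsTo_closedBall hGd hGmaps one_pos
  rw [hG', hGc, div_one, norm_div, norm_div, norm_pow, norm_real, Real.norm_of_nonneg hs.le,
    div_pow, le_sub_iff_add_le, ← add_div, div_le_one (pow_pos hs 2)] at hSP
  exact norm_add_sq_div_one_add_norm_le hlt hSP

end Complex

theorem hasFPowerSeriesOnBall_ofScalars_of_hasSum {f : ℂ → ℂ} {a : ℕ → ℂ} {R : ℝ≥0}
    (hR : 0 < R) (hf : ∀ z : ℂ, ‖z‖ < R → HasSum (fun k ↦ a k * z ^ k) (f z)) :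
    HasFPowerSeriesOnBall f (FormalMultilinearSeries.ofScalars ℂ a) 0 R where
  r_le := by
    refine ENNReal.le_of_forall_nnreal_lt fun q hq ↦ ?_
    have hq' : ‖(q : ℂ)‖ < R := by simpa using hq
    refine FormalMultilinearSeries.le_radius_of_tendsto _ (l := 0) ?_
    simpa [FormalMultilinearSeries.ofScalars_norm] using
      (hf q hq').summable.tendsto_atTop_zero.norm
  r_pos := by exact_mod_cast hR
  hasSum {y} hy := by
    rw [mem_eball_zero_iff, ← ofReal_norm, ENNReal.ofReal_lt_iff_lt_toReal (norm_nonneg y)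
      ENNReal.coe_ne_top, ENNReal.coe_toReal] at hy
    simpa [FormalMultilinearSeries.ofScalars_apply_eq, mul_comm] using hf y hy

theorem HasFPowerSeriesAt.deriv_dslope_eq_coeff_two {f : ℂ → ℂ}
    {p : FormalMultilinearSeries ℂ ℂ ℂ} {c : ℂ} (hf : HasFPowerSeriesAt f p c) :
    deriv (dslope f c) c = p.coeff 2 := by
  rw [hf.has_fpower_series_dslope_fslope.deriv]
  exact FormalMultilinearSeries.coeff_fslope

theorem Real.rpow_le_one_sub_half_mul_one_sub_sq {x p : ℝ} (hx : 0 ≤ x) (hp0 : 0 ≤ p)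
    (hp2 : p ≤ 2) : x ^ p ≤ 1 - p / 2 * (1 - x ^ 2) := by
  have hsq : x ^ p = (1 + (x ^ 2 - 1)) ^ (p / 2) := by
    rw [add_sub_cancel, ← Real.rpow_natCast, ← Real.rpow_mul hx]
    norm_num [mul_div_cancel₀]
  have := rpow_one_add_le_one_add_mul_self (by nlinarith : (-1 : ℝ) ≤ x ^ 2 - 1)
    (by linarith : 0 ≤ p / 2) (by linarith : p / 2 ≤ 1)
  linarith

theorem two_mul_mul_one_add_le_of_le_root {p r : ℝ} (hr0 : 0 ≤ r)
    (hr : r ≤ (-1 + √(1 + 2 * p)) / 2) : 2 * r * (1 + r) ≤ p := by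
  have h : 2 * r + 1 ≤ √(1 + 2 * p) := by linarith
  rw [Real.le_sqrt' (by linarith)] at h
  nlinarith

theorem bohr_sum_le_one_of_coeff_bounds {x b c p r : ℝ} (hx0 : 0 ≤ x) (hx1 : x ≤ 1)
    (hb : b ≤ 1 - x ^ 2) (hc : c + b ^ 2 / (1 + x) ≤ 1 - x ^ 2) (hp0 : 0 ≤ p) (hp2 : p ≤ 2)
    (hr0 : 0 ≤ r) (hrp : 2 * r * (1 + r) ≤ p) :
    x ^ p + b * r + c * r ^ 2 + b ^ 2 * r ^ 2 / (1 + x) ≤ 1 := by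
  have hx2 : 0 ≤ 1 - x ^ 2 := by nlinarith
  have hpow := Real.rpow_le_one_sub_half_mul_one_sub_sq hx0 hp0 hp2
  calc x ^ p + b * r + c * r ^ 2 + b ^ 2 * r ^ 2 / (1 + x)
      = x ^ p + b * r + (c + b ^ 2 / (1 + x)) * r ^ 2 := by ring
    _ ≤ x ^ p + (1 - x ^ 2) * r + (1 - x ^ 2) * r ^ 2 := by gcongr
    _ = x ^ p + (1 - x ^ 2) * (r * (1 + r)) := by ring
    _ ≤ 1 - p / 2 * (1 - x ^ 2) + (1 - x ^ 2) * (p / 2) := by gcongr; linarith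
    _ = 1 := by ring

/-- The `n = 2` case of the truncated refined Bohr inequality:
`|a₀|^p + |a₁| r + |a₂| r² + |a₁|² r²/(1+|a₀|) ≤ 1` for
`0 ≤ r ≤ (−1 + √(1+2p))/2`, the minimal positive root of `p = 2r(1+r)`. -/
theorem truncated_bohr_two (f : ℂ → ℂ) (a : ℕ → ℂ) (p : ℝ)
    (hf : ∀ z : ℂ, ‖z‖ < 1 → HasSum (fun k : ℕ => a k * z ^ k) (f z))
    (hb : ∀ z : ℂ, ‖z‖ < 1 → ‖f z‖ ≤ 1)
    (hp0 : 0 < p) (hp2 : p ≤ 2)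
    (r : ℝ) (hr0 : 0 ≤ r) (hr : r ≤ (-1 + Real.sqrt (1 + 2 * p)) / 2) :
    ‖a 0‖ ^ p + ‖a 1‖ * r + ‖a 2‖ * r ^ 2 + ‖a 1‖ ^ 2 * r ^ 2 / (1 + ‖a 0‖) ≤ 1 := by
  have hP : HasFPowerSeriesOnBall f (FormalMultilinearSeries.ofScalars ℂ a) 0 (1 : ℝ≥0) :=
    hasFPowerSeriesOnBall_ofScalars_of_hasSum one_pos (by simpa using hf)
  have hd : DifferentiableOn ℂ f (ball 0 1) := by
    simpa only [eball_coe, NNReal.coe_one] using hP.differentiableOn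
  have hmaps : MapsTo f (ball 0 1) (closedBall 0 1) := fun z hz ↦ by
    simpa using hb z (by simpa using hz)
  have ha₀ : f 0 = a 0 := by simpa using (hP.coeff_zero 1).symm
  have ha₁ : deriv f 0 = a 1 := by simpa using hP.hasFPowerSeriesAt.deriv
  have ha₂ : deriv (dslope f 0) 0 = a 2 := by
    simpa using hP.hasFPowerSeriesAt.deriv_dslope_eq_coeff_two
  have h₀ : ‖a 0‖ ≤ 1 := by simpa [ha₀] using hmaps (mem_ball_self one_pos)
  have h₁ := Complex.norm_deriv_le_one_sub_sq_div_of_mapsTo_closedBall hd hmaps one_pos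
  have h₂ := Complex.norm_deriv_dslope_add_sq_div_le hd hmaps
  rw [ha₀, ha₁, div_one] at h₁
  rw [ha₀, ha₁, ha₂] at h₂
  exact bohr_sum_le_one_of_coeff_bounds (norm_nonneg _) h₀ h₁ h₂ hp0.le hp2 hr0
    (two_mul_mul_one_add_le_of_le_root hr0 hr)
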